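/- arXiv:1609.00343 — 2 statements merged into one kernel-verified Lean document; each statement's English description precedes it below -/
import Mathlib

section
/- Let N ≥ 1 and let s ∈ ℕ, s ≥ 1. If μ and ν are Borel probability measures on ℝ^N with finite absolute moments up to order s and with equal moments up to order s − 1, i.e. ∫ v^β dμ(v) = ∫ v^β dν(v) for every multi-index β with |β| ≤ s − 1, then d_s(μ, ν) < ∞. -/
open MeasureTheory Filter Topology ENNReal

noncomputable def charFun' {N : ℕ} (μ : Measure (EuclideanSpace ℝ (Fin N)))
    (x : EuclideanSpace ℝ (Fin N)) : ℂ :=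
  ∫ v, Complex.exp (-(((inner ℝ x v : ℝ) : ℂ) * Complex.I)) ∂μ

noncomputable def dFourier {N : ℕ} (s : ℝ)
    (μ ν : Measure (EuclideanSpace ℝ (Fin N))) : ℝ≥0∞ :=
  ⨆ (x : EuclideanSpace ℝ (Fin N)) (_ : x ≠ 0),
    ENNReal.ofReal (‖charFun' μ x - charFun' ν x‖ / ‖x‖ ^ s)

/-!
Expand `exp (i⟪v, t⟫)` to order `s - 1` in `⟪v, t⟫`. The remainder is bounded by
`|⟪v, t⟫| ^ s ≤ ‖v‖ ^ s ‖t‖ ^ s` for all `v`, and the Taylor polynomial has the same integral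
under `μ` and `ν`, because by the multinomial theorem `⟪v, t⟫ ^ k` is a combination of monomials
of degree `k ≤ s - 1`. Hence `|φ_μ(t) - φ_ν(t)| ≤ (∫ ‖v‖ ^ s dμ + ∫ ‖v‖ ^ s dν) ‖t‖ ^ s`.
-/

open Complex Finset Nat RealInnerProductSpace

lemma hasDerivAt_ofReal_mul_I_pow_succ_div_factorial (n : ℕ) (u : ℝ) :
    HasDerivAt (fun t : ℝ => ((t : ℂ) * I) ^ (n + 1) / ((n + 1)! : ℂ))
      (I * (((u : ℂ) * I) ^ n / (n ! : ℂ))) u := by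
  refine ((((hasDerivAt_id u).ofReal_comp.mul_const I).fun_pow (n + 1)).div_const _).congr_deriv
    ?_
  push_cast [Nat.factorial_succ, Nat.add_sub_cancel, id]
  field_simp

lemma hasDerivAt_sum_range_ofReal_mul_I_pow_div_factorial (n : ℕ) (u : ℝ) :
    HasDerivAt (fun t : ℝ => ∑ k ∈ range (n + 1), ((t : ℂ) * I) ^ k / (k ! : ℂ))
      (I * ∑ k ∈ range n, ((u : ℂ) * I) ^ k / (k ! : ℂ)) u := by
  induction n with
  | zero => simpa using hasDerivAt_const u (1 : ℂ)
  | succ n ih =>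
    rw [sum_range_succ, mul_add]
    simp only [sum_range_succ _ (n + 1)]
    exact ih.add (hasDerivAt_ofReal_mul_I_pow_succ_div_factorial n u)

theorem norm_exp_ofReal_mul_I_sub_sum_le (n : ℕ) (t : ℝ) :
    ‖exp (t * I) - ∑ k ∈ range n, ((t : ℂ) * I) ^ k / (k ! : ℂ)‖ ≤ |t| ^ n := by
  induction n generalizing t with
  | zero => simp [norm_exp_ofReal_mul_I]
  | succ n ih =>
    set R : ℕ → ℝ → ℂ := fun m u => exp (u * I) - ∑ k ∈ range m, ((u : ℂ) * I) ^ k / (k ! : ℂ)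
    have hR (u : ℝ) : HasDerivAt (R (n + 1)) (I * R n u) u := by
      rw [mul_sub, mul_comm I]
      exact ((hasDerivAt_id u).ofReal_comp.mul_const I).cexp.sub
        (hasDerivAt_sum_range_ofReal_mul_I_pow_div_factorial n u) |>.congr_deriv (by simp)
    have hbound : ∀ u ∈ Set.Icc (-|t|) |t|, ‖I * R n u‖ ≤ |t| ^ n := fun u hu => by
      rw [norm_mul, norm_I, one_mul]
      exact (ih u).trans (pow_le_pow_left₀ (abs_nonneg u) (abs_le.2 hu) n)
    have hmvt := (convex_Icc (-|t|) |t|).norm_image_sub_le_of_norm_hasDerivWithin_le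
      (f' := fun u => I * R n u) (fun u _ => (hR u).hasDerivWithinAt) hbound
      (by simp : (0 : ℝ) ∈ Set.Icc (-|t|) |t|) (y := t) ⟨neg_abs_le t, le_abs_self t⟩
    simpa [R, sum_range_succ', pow_succ] using hmvt

section

variable {α : Type*} [MeasurableSpace α] {μ : Measure α} [IsFiniteMeasure μ]

theorem norm_integral_exp_mul_I_sub_sum_le {f : α → ℝ} {n : ℕ} (hf : AEStronglyMeasurable f μ)
    (hn : Integrable (fun a => |f a| ^ n) μ) :
    ‖∫ a, exp (f a * I) ∂μ - ∑ k ∈ range n, I ^ k / (k ! : ℂ) * ∫ a, f a ^ k ∂μ‖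
      ≤ ∫ a, |f a| ^ n ∂μ := by
  have hterm (k : ℕ) (hk : k ∈ range n) :
      Integrable (fun a => ((f a : ℂ) * I) ^ k / (k ! : ℂ)) μ := by
    have hnorm := integrable_norm_pow_of_le hf (mem_range.1 hk).le
      (by simpa only [Real.norm_eq_abs] using hn)
    have hpow : Integrable (fun a => f a ^ k) μ :=
      hnorm.mono' (hf.pow k) (ae_of_all _ fun a => (norm_pow _ _).le)
    refine (hpow.ofReal.const_mul (I ^ k / (k ! : ℂ))).congr (ae_of_all _ fun a => ?_)
    simp only [Complex.coe_algebraMap, Complex.ofReal_pow]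
    ring
  have hsum : ∑ k ∈ range n, I ^ k / (k ! : ℂ) * ∫ a, f a ^ k ∂μ
      = ∫ a, ∑ k ∈ range n, ((f a : ℂ) * I) ^ k / (k ! : ℂ) ∂μ := by
    rw [integral_finsetSum _ hterm]
    refine sum_congr rfl fun k _ => ?_
    rw [← integral_complex_ofReal, ← integral_const_mul]
    congr 1 with a
    push_cast
    ring
  have hexp : Integrable (fun a => exp (f a * I)) μ :=
    Integrable.of_bound (by fun_prop) 1 (ae_of_all _ fun a => (norm_exp_ofReal_mul_I (f a)).le)
  rw [hsum, ← integral_sub hexp (integrable_finsetSum _ hterm)]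
  exact norm_integral_le_of_norm_le hn
    (ae_of_all _ fun a => norm_exp_ofReal_mul_I_sub_sum_le n (f a))

end

section

variable {E : Type*} [NormedAddCommGroup E] [InnerProductSpace ℝ E] [MeasurableSpace E]
  [OpensMeasurableSpace E]

theorem norm_charFun_sub_sum_le {μ : Measure E} [IsFiniteMeasure μ] {n : ℕ}
    (hμ : Integrable (fun v => ‖v‖ ^ n) μ) (t : E) :
    ‖charFun μ t - ∑ k ∈ range n, I ^ k / (k ! : ℂ) * ∫ v, ⟪v, t⟫ ^ k ∂μ‖
      ≤ (∫ v, ‖v‖ ^ n ∂μ) * ‖t‖ ^ n := by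
  have hle (v : E) : |⟪v, t⟫| ^ n ≤ ‖v‖ ^ n * ‖t‖ ^ n := by
    rw [← mul_pow]
    exact pow_le_pow_left₀ (abs_nonneg _) (abs_real_inner_le_norm v t) n
  have hinner : AEStronglyMeasurable (fun v => ⟪v, t⟫) μ := by fun_prop
  have hint : Integrable (fun v => |⟪v, t⟫| ^ n) μ :=
    (hμ.mul_const _).mono' (by fun_prop) (ae_of_all _ fun v => by
      simpa only [Real.norm_eq_abs, abs_pow, abs_abs] using hle v)
  calc _ ≤ ∫ v, |⟪v, t⟫| ^ n ∂μ := norm_integral_exp_mul_I_sub_sum_le hinner hint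
    _ ≤ ∫ v, ‖v‖ ^ n * ‖t‖ ^ n ∂μ := integral_mono hint (hμ.mul_const _) hle
    _ = (∫ v, ‖v‖ ^ n ∂μ) * ‖t‖ ^ n := integral_mul_const _ _

theorem norm_charFun_sub_charFun_le {μ ν : Measure E} [IsFiniteMeasure μ] [IsFiniteMeasure ν]
    {n : ℕ} (hμ : Integrable (fun v => ‖v‖ ^ n) μ) (hν : Integrable (fun v => ‖v‖ ^ n) ν) (t : E)
    (heq : ∀ k < n, ∫ v, ⟪v, t⟫ ^ k ∂μ = ∫ v, ⟪v, t⟫ ^ k ∂ν) :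
    ‖charFun μ t - charFun ν t‖ ≤ (∫ v, ‖v‖ ^ n ∂μ + ∫ v, ‖v‖ ^ n ∂ν) * ‖t‖ ^ n := by
  have hsum : ∑ k ∈ range n, I ^ k / (k ! : ℂ) * ∫ v, ⟪v, t⟫ ^ k ∂μ
      = ∑ k ∈ range n, I ^ k / (k ! : ℂ) * ∫ v, ⟪v, t⟫ ^ k ∂ν :=
    sum_congr rfl fun k hk => by rw [heq k (mem_range.1 hk)]
  rw [add_mul]
  refine (norm_sub_le_norm_sub_add_norm_sub _
    (∑ k ∈ range n, I ^ k / (k ! : ℂ) * ∫ v, ⟪v, t⟫ ^ k ∂μ) _).trans (add_le_add ?_ ?_)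
  · exact norm_charFun_sub_sum_le hμ t
  · rw [hsum, norm_sub_rev]
    exact norm_charFun_sub_sum_le hν t

end

section

variable {ι : Type*} [Fintype ι]

lemma abs_prod_pow_le_norm_pow (v : EuclideanSpace ℝ ι) (β : ι → ℕ) :
    |∏ i, v i ^ β i| ≤ ‖v‖ ^ ∑ i, β i := by
  rw [abs_prod, ← prod_pow_eq_pow_sum]
  gcongr with i
  rw [abs_pow]
  exact pow_le_pow_left₀ (abs_nonneg _) (PiLp.norm_apply_le v i) _

lemma inner_pow_eq_sum_piAntidiag [DecidableEq ι] (v t : EuclideanSpace ℝ ι) (k : ℕ) :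
    ⟪v, t⟫ ^ k = ∑ β ∈ piAntidiag univ k,
      (multinomial univ β * ∏ i, t i ^ β i) * ∏ i, v i ^ β i := by
  simp_rw [PiLp.inner_apply, RCLike.inner_apply, conj_trivial, sum_pow_eq_sum_piAntidiag,
    mul_assoc, ← prod_mul_distrib, mul_pow]

theorem integral_inner_pow_eq_of_moments_eq [DecidableEq ι]
    {μ ν : Measure (EuclideanSpace ℝ ι)} {k : ℕ}
    (hμ : Integrable (fun v => ‖v‖ ^ k) μ) (hν : Integrable (fun v => ‖v‖ ^ k) ν)
    (heq : ∀ β : ι → ℕ, ∑ i, β i = k → ∫ v, ∏ i, v i ^ β i ∂μ = ∫ v, ∏ i, v i ^ β i ∂ν)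
    (t : EuclideanSpace ℝ ι) :
    ∫ v, ⟪v, t⟫ ^ k ∂μ = ∫ v, ⟪v, t⟫ ^ k ∂ν := by
  have hexpand (ρ : Measure (EuclideanSpace ℝ ι)) (hρ : Integrable (fun v => ‖v‖ ^ k) ρ) :
      ∫ v, ⟪v, t⟫ ^ k ∂ρ = ∑ β ∈ piAntidiag univ k,
        (multinomial univ β * ∏ i, t i ^ β i) * ∫ v, ∏ i, v i ^ β i ∂ρ := by
    simp_rw [inner_pow_eq_sum_piAntidiag _ t]
    rw [integral_finsetSum]
    · simp_rw [integral_const_mul]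
    intro β hβ
    refine Integrable.const_mul (hρ.mono' (by fun_prop) (ae_of_all _ fun v => ?_)) _
    rw [← (mem_piAntidiag.1 hβ).1]
    exact abs_prod_pow_le_norm_pow v β
  rw [hexpand μ hμ, hexpand ν hν]
  exact sum_congr rfl fun β hβ => by rw [heq β (mem_piAntidiag.1 hβ).1]

end

lemma charFun'_eq_charFun_neg {N : ℕ} (μ : Measure (EuclideanSpace ℝ (Fin N)))
    (x : EuclideanSpace ℝ (Fin N)) : charFun' μ x = charFun μ (-x) := by
  simp only [charFun', charFun_apply, inner_neg_right, real_inner_comm x, ofReal_neg, neg_mul]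

lemma dFourier_le_ofReal {N : ℕ} {s C : ℝ} {μ ν : Measure (EuclideanSpace ℝ (Fin N))}
    (h : ∀ x, ‖charFun' μ x - charFun' ν x‖ ≤ C * ‖x‖ ^ s) :
    dFourier s μ ν ≤ ENNReal.ofReal C := by
  refine iSup₂_le fun x hx => ENNReal.ofReal_le_ofReal ?_
  rw [div_le_iff₀ (Real.rpow_pos_of_pos (norm_pos_iff.2 hx) s)]
  exact h x

theorem dFourier_lt_top_of_eq_moments_int_general (N : ℕ)
    (s : ℕ)
    (μ ν : Measure (EuclideanSpace ℝ (Fin N)))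
    (hμprob : IsProbabilityMeasure μ) (hνprob : IsProbabilityMeasure ν)
    (hμfin : Integrable (fun v => ‖v‖ ^ s) μ)
    (hνfin : Integrable (fun v => ‖v‖ ^ s) ν)
    (heq : ∀ β : Fin N → ℕ, (∑ i, β i) ≤ s - 1 →
      ∫ v, ∏ i, (v i) ^ (β i) ∂μ = ∫ v, ∏ i, (v i) ^ (β i) ∂ν) :
    dFourier (s : ℝ) μ ν < ⊤ := by
  refine (dFourier_le_ofReal (C := ∫ v, ‖v‖ ^ s ∂μ + ∫ v, ‖v‖ ^ s ∂ν) fun x => ?_).trans_lt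
    ofReal_lt_top
  rw [charFun'_eq_charFun_neg, charFun'_eq_charFun_neg, Real.rpow_natCast, ← norm_neg x]
  refine norm_charFun_sub_charFun_le hμfin hνfin (-x) fun k hk => ?_
  exact integral_inner_pow_eq_of_moments_eq
    (integrable_norm_pow_of_le aestronglyMeasurable_id hk.le hμfin)
    (integrable_norm_pow_of_le aestronglyMeasurable_id hk.le hνfin)
    (fun β hβ => heq β (by omega)) (-x)

/-- For integer s ≥ 1, if two probability measures have finite absolute
moments up to order s and equal moments up to order s − 1, then d_s(μ,ν) < ∞. -/
theorem dFourier_lt_top_of_eq_moments_int (N : ℕ) (hN : 1 ≤ N)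
    (s : ℕ) (hs : 1 ≤ s)
    (μ ν : Measure (EuclideanSpace ℝ (Fin N)))
    (hμprob : IsProbabilityMeasure μ) (hνprob : IsProbabilityMeasure ν)
    (hμfin : Integrable (fun v => ‖v‖ ^ s) μ)
    (hνfin : Integrable (fun v => ‖v‖ ^ s) ν)
    (heq : ∀ β : Fin N → ℕ, (∑ i, β i) ≤ s - 1 →
      ∫ v, ∏ i, (v i) ^ (β i) ∂μ = ∫ v, ∏ i, (v i) ^ (β i) ∂ν) :
    dFourier (s : ℝ) μ ν < ⊤ :=
  dFourier_lt_top_of_eq_moments_int_general N s μ ν hμprob hνprob hμfin hνfin heq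
end

section
/- Let N ≥ 1 and s > 0. Let (μ_n) be a sequence of Borel probability measures on ℝ^N that is Cauchy with respect to d_s, and let μ be a Borel probability measure on ℝ^N such that the characteristic functions φ_{μ_n} converge pointwise on ℝ^N to φ_μ. Then d_s(μ_n, μ) → 0 as n → ∞. -/
open MeasureTheory Filter Topology ENNReal

/- Since `dFourier s μ` is a supremum of functions of `ν` that are continuous for pointwise
convergence of characteristic functions, it is lower semicontinuous: a bound on
`d_s(μ, ν_m)` for large `m` passes to the pointwise limit `ν`. Applied with `μ = μ_n` and
`ν_m = μ_m`, the Cauchy bound `d_s(μ_n, μ_m) ≤ ε` becomes `d_s(μ_n, μ) ≤ ε`. -/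

section

variable {N : ℕ} {s : ℝ}

theorem ofReal_le_dFourier (μ ν : Measure (EuclideanSpace ℝ (Fin N)))
    {x : EuclideanSpace ℝ (Fin N)} (hx : x ≠ 0) :
    ENNReal.ofReal (‖charFun' μ x - charFun' ν x‖ / ‖x‖ ^ s) ≤ dFourier s μ ν :=
  le_iSup₂ (f := fun x (_ : x ≠ 0) =>
    ENNReal.ofReal (‖charFun' μ x - charFun' ν x‖ / ‖x‖ ^ s)) x hx

theorem dFourier_le_of_tendsto_charFun {ι : Type*} {l : Filter ι} [l.NeBot]
    {μ ν : Measure (EuclideanSpace ℝ (Fin N))} {ν' : ι → Measure (EuclideanSpace ℝ (Fin N))}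
    {c : ℝ≥0∞} (hν : ∀ x, Tendsto (fun i => charFun' (ν' i) x) l (𝓝 (charFun' ν x)))
    (hc : ∀ᶠ i in l, dFourier s μ (ν' i) ≤ c) :
    dFourier s μ ν ≤ c := by
  refine iSup₂_le fun x hx => ?_
  have hquot : Tendsto (fun i => ENNReal.ofReal (‖charFun' μ x - charFun' (ν' i) x‖ / ‖x‖ ^ s))
      l (𝓝 (ENNReal.ofReal (‖charFun' μ x - charFun' ν x‖ / ‖x‖ ^ s))) :=
    ENNReal.tendsto_ofReal (((tendsto_const_nhds.sub (hν x)).norm).div_const _)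
  refine le_of_tendsto hquot ?_
  filter_upwards [hc] with i hi
  exact (ofReal_le_dFourier μ (ν' i) hx).trans hi

end

theorem dFourier_tendsto_zero_of_cauchy_general (N : ℕ)
    (s : ℝ)
    (μ : ℕ → Measure (EuclideanSpace ℝ (Fin N)))
    (μlim : Measure (EuclideanSpace ℝ (Fin N)))
    (hcauchy : ∀ ε : ℝ, 0 < ε → ∃ n₀ : ℕ, ∀ n m : ℕ, n₀ < n → n₀ < m →
      dFourier s (μ n) (μ m) < ENNReal.ofReal ε)
    (hpt : ∀ x, Tendsto (fun n => charFun' (μ n) x) atTop (𝓝 (charFun' μlim x))) :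
    Tendsto (fun n => dFourier s (μ n) μlim) atTop (𝓝 0) := by
  rw [ENNReal.tendsto_nhds_zero]
  intro ε hε
  obtain ⟨r, -, hr_pos, hr_lt⟩ := ENNReal.lt_iff_exists_real_btwn.mp hε
  obtain ⟨n₀, hn₀⟩ := hcauchy r (ENNReal.ofReal_pos.mp hr_pos)
  filter_upwards [eventually_gt_atTop n₀] with n hn
  have hcauchy_n : ∀ᶠ m in atTop, dFourier s (μ n) (μ m) ≤ ENNReal.ofReal r := by
    filter_upwards [eventually_gt_atTop n₀] with m hm
    exact (hn₀ n m hn hm).le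
  exact (dFourier_le_of_tendsto_charFun hpt hcauchy_n).trans hr_lt.le

/-- If a sequence of probability measures is Cauchy for d_s and its
characteristic functions converge pointwise to that of μ, then d_s(μ_n, μ) → 0. -/
theorem dFourier_tendsto_zero_of_cauchy (N : ℕ) (hN : 1 ≤ N)
    (s : ℝ) (hs : 0 < s)
    (μ : ℕ → Measure (EuclideanSpace ℝ (Fin N)))
    (hprob : ∀ n, IsProbabilityMeasure (μ n))
    (μlim : Measure (EuclideanSpace ℝ (Fin N)))
    (hlimprob : IsProbabilityMeasure μlim)
    (hcauchy : ∀ ε : ℝ, 0 < ε → ∃ n₀ : ℕ, ∀ n m : ℕ, n₀ < n → n₀ < m →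
      dFourier s (μ n) (μ m) < ENNReal.ofReal ε)
    (hpt : ∀ x, Tendsto (fun n => charFun' (μ n) x) atTop (𝓝 (charFun' μlim x))) :
    Tendsto (fun n => dFourier s (μ n) μlim) atTop (𝓝 0) :=
  dFourier_tendsto_zero_of_cauchy_general N s μ μlim hcauchy hpt
end
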